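/- arXiv:2503.21420 — 9 statements merged into one kernel-verified Lean document; each statement's English description precedes it below -/
import Mathlib

section
/- Let t > 0 be a real number and let q ≥ 1 be an integer with q ≥ t - 1. Let (a_m)_{m∈ℕ} be a sequence of real numbers satisfying |a_m| ≤ (1/m!)·(t/2)^m for all m. Then 2·∑_{l=0}^{∞} |a_{q+2l}| ≤ (8/(3·q!))·(t/2)^q. -/
open scoped Nat

/-- Tail bound for the Jacobi–Anger truncation: if `|a m| ≤ (1/m!)·(t/2)^m` for all `m`,
`q ≥ 1` and `q ≥ t - 1`, then `2·∑_{l=0}^∞ |a (q+2l)| ≤ (8/(3·q!))·(t/2)^q`. -/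
theorem stmt_0 (t : ℝ) (ht : 0 < t) (q : ℕ) (hq : 1 ≤ q) (hqt : (q : ℝ) ≥ t - 1)
    (a : ℕ → ℝ) (ha : ∀ m : ℕ, |a m| ≤ (1 / (m ! : ℝ)) * (t / 2) ^ m) :
    2 * ∑' l : ℕ, |a (q + 2 * l)| ≤ (8 / (3 * (q ! : ℝ))) * (t / 2) ^ q := by
  set C : ℝ := (1 / (q ! : ℝ)) * (t / 2) ^ q with hC
  have hCpos : 0 < C := by
    apply mul_pos (by positivity) (by positivity)
  have key : ∀ l : ℕ, |a (q + 2 * l)| ≤ C * (1 / 4) ^ l := by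
    intro l
    refine (ha (q + 2 * l)).trans ?_
    have hfac : (q ! : ℝ) * ((q : ℝ) + 1) ^ (2 * l) ≤ ((q + 2 * l)! : ℝ) := by
      exact_mod_cast Nat.cast_le.mpr (Nat.factorial_mul_pow_le_factorial)
    have ht1 : t ≤ (q : ℝ) + 1 := by linarith
    have htpow : t ^ (2 * l) ≤ ((q : ℝ) + 1) ^ (2 * l) :=
      pow_le_pow_left₀ ht.le ht1 _
    have hfac2 : (q ! : ℝ) * t ^ (2 * l) ≤ ((q + 2 * l)! : ℝ) := by
      calc (q ! : ℝ) * t ^ (2*l) ≤ (q ! : ℝ) * ((q:ℝ)+1)^(2*l) := by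
            exact mul_le_mul_of_nonneg_left htpow (by positivity)
        _ ≤ _ := hfac
    have hqfpos : (0:ℝ) < (q ! : ℝ) := by exact_mod_cast Nat.factorial_pos q
    have hqlpos : (0:ℝ) < ((q + 2*l)! : ℝ) := by exact_mod_cast Nat.factorial_pos _
    rw [hC]
    have h2 : ((2:ℝ))^(2*l) = 4^l := by rw [pow_mul]; norm_num
    have hrw : (t / 2) ^ (q + 2 * l) = (t/2)^q * t^(2*l) / 4^l := by
      rw [pow_add, div_pow, div_pow, h2]; ring
    have h14 : ((1:ℝ)/4)^l = 1/4^l := one_div_pow _ _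
    rw [hrw, h14]
    have hmain : t^(2*l)/((q+2*l)! : ℝ) ≤ 1/(q ! : ℝ) := by
      rw [div_le_div_iff₀ hqlpos hqfpos]; linarith [hfac2]
    calc 1/((q+2*l)! : ℝ) * ((t/2)^q * t^(2*l)/4^l)
        = ((t/2)^q/4^l) * (t^(2*l)/((q+2*l)! : ℝ)) := by ring
      _ ≤ ((t/2)^q/4^l) * (1/(q ! : ℝ)) := mul_le_mul_of_nonneg_left hmain (by positivity)
      _ = 1/(q ! : ℝ) * (t/2)^q * (1/4^l) := by ring
  have hgsum : Summable (fun l : ℕ => C * (1 / 4 : ℝ) ^ l) :=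
    (summable_geometric_of_lt_one (by norm_num) (by norm_num)).mul_left C
  have hsum : Summable (fun l : ℕ => |a (q + 2 * l)|) :=
    Summable.of_nonneg_of_le (fun l => abs_nonneg _) key hgsum
  have htsum : ∑' l : ℕ, |a (q + 2 * l)| ≤ ∑' l : ℕ, C * (1 / 4 : ℝ) ^ l :=
    Summable.tsum_le_tsum key hsum hgsum
  have hgeo : ∑' l : ℕ, C * (1 / 4 : ℝ) ^ l = C * (4 / 3) := by
    rw [tsum_mul_left, tsum_geometric_of_lt_one (by norm_num) (by norm_num)]
    norm_num
  rw [hgeo] at htsum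
  have : 8 / (3 * (q ! : ℝ)) * (t / 2) ^ q = 2 * (C * (4/3)) := by
    rw [hC]; field_simp; ring
  rw [this]
  linarith
end

section
/- Let κ ≥ 1 and t₀ > 0 be real numbers, let λ ∈ [1/κ, 1], and let τ be a nonnegative integer. Define f := 1/(2κλ), Δ := t₀λ − 2πτ, and f̃ := t₀/(4πκτ) if τ ≥ t₀/(4πκ), and f̃ := 0 otherwise. Then (f̃ − f)² ≤ (4κ²/t₀²)·Δ²·f². -/
open scoped Real

/-- HHL amplitude comparison: with `f = 1/(2κλ)`, `Δ = t₀λ − 2πτ` and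
`f̃ = t₀/(4πκτ)` for `τ ≥ t₀/(4πκ)` (and `f̃ = 0` otherwise), one has
`(f̃ − f)² ≤ (4κ²/t₀²)·Δ²·f²`. -/
theorem stmt_5 (κ t₀ lam : ℝ) (hκ : 1 ≤ κ) (ht₀ : 0 < t₀)
    (hlam : lam ∈ Set.Icc (1 / κ) 1) (τ : ℕ) :
    ((if t₀ / (4 * π * κ) ≤ (τ : ℝ) then t₀ / (4 * π * κ * (τ : ℝ)) else 0)
        - 1 / (2 * κ * lam)) ^ 2
      ≤ 4 * κ ^ 2 / t₀ ^ 2 * (t₀ * lam - 2 * π * (τ : ℝ)) ^ 2 * (1 / (2 * κ * lam)) ^ 2 := by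
  have hπ : (0:ℝ) < π := Real.pi_pos
  have hκ0 : (0:ℝ) < κ := lt_of_lt_of_le one_pos hκ
  obtain ⟨hl1, hl2⟩ := hlam
  have hlam0 : 0 < lam := lt_of_lt_of_le (by positivity) hl1
  by_cases h : t₀ / (4 * π * κ) ≤ (τ : ℝ)
  · rw [if_pos h]
    have hτ : (0:ℝ) < τ := lt_of_lt_of_le (by positivity) h
    have ht : t₀ ≤ 4 * π * κ * τ := by
      rw [div_le_iff₀ (by positivity)] at h; linarith [h]
    have key : t₀ / (4 * π * κ * τ) - 1 / (2 * κ * lam)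
        = (t₀ * lam - 2 * π * τ) / (4 * π * κ * τ * lam) := by
      field_simp; ring
    have key2 : 4 * κ ^ 2 / t₀ ^ 2 * (t₀ * lam - 2 * π * (τ : ℝ)) ^ 2 * (1 / (2 * κ * lam)) ^ 2
        = (t₀ * lam - 2 * π * τ) ^ 2 / (t₀ * lam) ^ 2 := by
      field_simp; ring
    rw [key, key2, div_pow]
    have hd : (t₀ * lam) ^ 2 ≤ (4 * π * κ * (τ:ℝ) * lam) ^ 2 := by
      nlinarith [mul_le_mul_of_nonneg_right ht hlam0.le, mul_pos ht₀ hlam0]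
    exact div_le_div_of_nonneg_left (by positivity) (by positivity) hd
  · rw [if_neg h]
    push_neg at h
    have h' : 4 * π * κ * τ < t₀ := by
      rw [lt_div_iff₀ (by positivity)] at h
      linarith
    have hk : 1 ≤ κ * lam := by
      rw [div_le_iff₀ hκ0] at hl1; linarith
    have hΔ : t₀ < 2 * κ * (t₀ * lam - 2 * π * (τ:ℝ)) := by
      nlinarith [mul_le_mul_of_nonneg_left hk ht₀.le]
    have hsq : t₀ ^ 2 ≤ (2 * κ * (t₀ * lam - 2 * π * (τ:ℝ))) ^ 2 := by nlinarith
    rw [div_mul_eq_mul_div, div_mul_eq_mul_div, le_div_iff₀ (by positivity)]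
    have hF : (0:ℝ) ≤ (1 / (2 * κ * lam)) ^ 2 := by positivity
    nlinarith [mul_le_mul_of_nonneg_right hsq hF]
end

section
/- Let T ≥ 1 be an integer, let τ₀ ∈ {0, 1, …, T−1}, let δ be a real number with |δ| ≤ 1/2, and let a : {0, 1, …, T−1} → [0, 1] be such that a_τ ≤ (4/π²)·(τ₀ − τ + δ)^{−4} for every τ with |τ − τ₀| ≥ 2. Then ∑_{τ=0}^{T−1} a_τ·(τ₀ − τ + δ)² ≤ 11/4 + 16/π². -/
open scoped Real

open Finset

/-!
Write `x τ = τ₀ - τ + δ`. The three terms with `|τ - τ₀| ≤ 1` are bounded using `a τ ≤ 1`: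
they contribute at most `(1 + δ)² + δ² + (1 - δ)² = 2 + 3δ² ≤ 11/4`. At distance `k ≥ 2`
one has `x² ≥ (k - 1/2)² ≥ (k - 1)k`, so the quartic decay gives
`a τ x² ≤ C / x² ≤ C (1/(k - 1) - 1/k)` with `C = 4/π²`, and each tail telescopes to at most `C`.
-/

theorem sum_range_one_div_sub_one_div_le_one (n : ℕ) :
    ∑ j ∈ range n, (1 / ((j : ℝ) + 1) - 1 / ((j : ℝ) + 2)) ≤ 1 := by
  have htelescope := sum_range_sub' (fun j : ℕ => 1 / ((j : ℝ) + 1)) n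
  simp only [Nat.cast_add, Nat.cast_one, Nat.cast_zero, add_assoc, one_add_one_eq_two, zero_add,
    div_one] at htelescope
  rw [htelescope]
  have : 0 ≤ 1 / ((n : ℝ) + 1) := by positivity
  linarith

theorem mul_sq_le_of_le_div_pow_four {C δ y b : ℝ} (hC : 0 ≤ C) (hδ : |δ| ≤ 1 / 2) (j : ℕ)
    (hy : |y| = j + 2) (hb : b ≤ C / (y + δ) ^ 4) :
    b * (y + δ) ^ 2 ≤ C * (1 / ((j : ℝ) + 1) - 1 / ((j : ℝ) + 2)) := by
  have hj : (0 : ℝ) ≤ j := j.cast_nonneg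
  have hfar : (j : ℝ) + 3 / 2 ≤ |y + δ| := by
    have := abs_sub_abs_le_abs_sub y (-δ)
    rw [abs_neg, sub_neg_eq_add, hy] at this
    linarith
  have hsq : ((j : ℝ) + 1) * (j + 2) ≤ (y + δ) ^ 2 := by
    rw [← sq_abs]
    nlinarith
  have hpos : 0 < (y + δ) ^ 2 := by nlinarith
  calc b * (y + δ) ^ 2 ≤ C / (y + δ) ^ 4 * (y + δ) ^ 2 := by gcongr
    _ = C / (y + δ) ^ 2 := by field_simp
    _ ≤ C / (((j : ℝ) + 1) * (j + 2)) := by gcongr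
    _ = C * (1 / ((j : ℝ) + 1) - 1 / ((j : ℝ) + 2)) := by field_simp; ring

theorem sum_range_mul_sq_le_of_le_div_pow_four {C δ : ℝ} (hC : 0 ≤ C) (hδ : |δ| ≤ 1 / 2)
    {n : ℕ} {b y : ℕ → ℝ} (hy : ∀ j < n, |y j| = j + 2)
    (hb : ∀ j < n, b j ≤ C / (y j + δ) ^ 4) :
    ∑ j ∈ range n, b j * (y j + δ) ^ 2 ≤ C :=
  calc ∑ j ∈ range n, b j * (y j + δ) ^ 2
      ≤ ∑ j ∈ range n, C * (1 / ((j : ℝ) + 1) - 1 / ((j : ℝ) + 2)) :=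
        sum_le_sum fun j hj => mul_sq_le_of_le_div_pow_four hC hδ j
          (hy j (mem_range.mp hj)) (hb j (mem_range.mp hj))
    _ = C * ∑ j ∈ range n, (1 / ((j : ℝ) + 1) - 1 / ((j : ℝ) + 2)) := (mul_sum ..).symm
    _ ≤ C := mul_le_of_le_one_right hC (sum_range_one_div_sub_one_div_le_one n)

theorem left_tail_sum_le {C δ : ℝ} (hC : 0 ≤ C) (hδ : |δ| ≤ 1 / 2) {τ₀ : ℕ} {a : ℕ → ℝ}
    (ha : ∀ τ < τ₀ - 1, a τ ≤ C / ((τ₀ : ℝ) - τ + δ) ^ 4) :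
    ∑ τ ∈ range (τ₀ - 1), a τ * ((τ₀ : ℝ) - τ + δ) ^ 2 ≤ C := by
  have hdist : ∀ j < τ₀ - 1, |(τ₀ : ℝ) - (τ₀ - 1 - 1 - j : ℕ)| = j + 2 := fun j hj => by
    rw [show τ₀ - 1 - 1 - j = τ₀ - (j + 2) by omega, Nat.cast_sub (by omega)]
    push_cast
    rw [sub_sub_cancel, abs_of_nonneg (by positivity)]
  rw [← sum_range_reflect]
  exact sum_range_mul_sq_le_of_le_div_pow_four hC hδ hdist fun j hj => ha _ (by omega)

theorem right_tail_sum_le {C δ : ℝ} (hC : 0 ≤ C) (hδ : |δ| ≤ 1 / 2) {τ₀ T : ℕ} {a : ℕ → ℝ}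
    (ha : ∀ τ ∈ Ico (τ₀ + 2) T, a τ ≤ C / ((τ₀ : ℝ) - τ + δ) ^ 4) :
    ∑ τ ∈ Ico (τ₀ + 2) T, a τ * ((τ₀ : ℝ) - τ + δ) ^ 2 ≤ C := by
  have hdist : ∀ j < T - (τ₀ + 2), |(τ₀ : ℝ) - (τ₀ + 2 + j : ℕ)| = j + 2 := fun j _ => by
    push_cast
    rw [show (τ₀ : ℝ) - (τ₀ + 2 + j) = -(j + 2) by ring, abs_neg, abs_of_nonneg (by positivity)]
  rw [sum_Ico_eq_sum_range]
  exact sum_range_mul_sq_le_of_le_div_pow_four hC hδ hdist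
    fun j hj => ha _ (mem_Ico.mpr ⟨by omega, by omega⟩)

theorem sum_Ico_sq_le (τ₀ : ℕ) {δ : ℝ} (hδ : |δ| ≤ 1 / 2) :
    ∑ τ ∈ Ico (τ₀ - 1) (τ₀ + 2), ((τ₀ : ℝ) - τ + δ) ^ 2 ≤ 11 / 4 := by
  obtain ⟨hδl, hδu⟩ := abs_le.mp hδ
  rcases τ₀ with _ | m
  · simp only [zero_tsub, zero_add, Nat.Ico_zero_eq_range, CharP.cast_eq_zero, zero_sub,
      sum_range_succ, range_one, sum_singleton, neg_zero, Nat.cast_one]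
    nlinarith
  · rw [sum_Ico_eq_sum_range, show m + 1 + 2 - (m + 1 - 1) = 3 by omega]
    simp only [Nat.cast_add, Nat.cast_one, add_tsub_cancel_right, add_sub_add_left_eq_sub,
      sum_range_succ, range_one, sum_singleton, CharP.cast_eq_zero, sub_zero, sub_self, zero_add,
      Nat.cast_ofNat]
    nlinarith

theorem central_sum_le {τ₀ : ℕ} {δ : ℝ} (hδ : |δ| ≤ 1 / 2) {a : ℕ → ℝ}
    {s : Finset ℕ} (hs : s ⊆ Ico (τ₀ - 1) (τ₀ + 2)) (ha : ∀ τ ∈ s, a τ ≤ 1) :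
    ∑ τ ∈ s, a τ * ((τ₀ : ℝ) - τ + δ) ^ 2 ≤ 11 / 4 :=
  calc ∑ τ ∈ s, a τ * ((τ₀ : ℝ) - τ + δ) ^ 2
      ≤ ∑ τ ∈ s, ((τ₀ : ℝ) - τ + δ) ^ 2 :=
        sum_le_sum fun τ hτ => mul_le_of_le_one_left (sq_nonneg _) (ha τ hτ)
    _ ≤ ∑ τ ∈ Ico (τ₀ - 1) (τ₀ + 2), ((τ₀ : ℝ) - τ + δ) ^ 2 :=
        sum_le_sum_of_subset_of_nonneg hs fun _ _ _ => sq_nonneg _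
    _ ≤ 11 / 4 := sum_Ico_sq_le τ₀ hδ

theorem stmt_8_general (T : ℕ) (τ₀ : ℕ) (hτ₀ : τ₀ < T)
    (δ : ℝ) (hδ : |δ| ≤ 1 / 2) (a : ℕ → ℝ)
    (ha : ∀ τ < T, a τ ∈ Set.Icc (0 : ℝ) 1)
    (ha' : ∀ τ < T, 2 ≤ |(τ : ℝ) - (τ₀ : ℝ)| →
      a τ ≤ (4 / π ^ 2) / ((τ₀ : ℝ) - (τ : ℝ) + δ) ^ 4) :
    ∑ τ ∈ Finset.range T, a τ * ((τ₀ : ℝ) - (τ : ℝ) + δ) ^ 2 ≤ 11 / 4 + 16 / π ^ 2 := by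
  have hC : 0 ≤ 4 / π ^ 2 := by positivity
  have hfar : ∀ τ < T, τ + 2 ≤ τ₀ ∨ τ₀ + 2 ≤ τ →
      a τ ≤ (4 / π ^ 2) / ((τ₀ : ℝ) - τ + δ) ^ 4 := by
    refine fun τ hτ hdist => ha' τ hτ (le_abs.mpr ?_)
    rcases hdist with hdist | hdist
    · have : (τ : ℝ) + 2 ≤ τ₀ := by exact_mod_cast hdist
      right; linarith
    · have : (τ₀ : ℝ) + 2 ≤ τ := by exact_mod_cast hdist
      left; linarith
  have hLR : τ₀ - 1 ≤ min T (τ₀ + 2) := by omega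
  rw [← sum_range_add_sum_Ico _ (hLR.trans (min_le_left _ _)),
    ← sum_Ico_consecutive _ hLR (min_le_left _ _),
    show Ico (min T (τ₀ + 2)) T = Ico (τ₀ + 2) T by ext; simp; omega]
  have hleft := left_tail_sum_le hC hδ fun τ hτ => hfar τ (by omega) (.inl (by omega))
  have hcentral := central_sum_le (τ₀ := τ₀) hδ (Ico_subset_Ico le_rfl (min_le_right _ _))
    fun τ hτ => (ha τ ((mem_Ico.mp hτ).2.trans_le (min_le_left _ _))).2
  have hright := right_tail_sum_le hC hδ
    fun τ hτ => hfar τ (mem_Ico.mp hτ).2 (.inr (mem_Ico.mp hτ).1)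
  have hπ : 2 * (4 / π ^ 2) ≤ 16 / π ^ 2 := by
    rw [← mul_div_assoc]; gcongr; norm_num
  linarith

/-- Second moment of the QPE mismatch in the HHL analysis: if `0 ≤ a τ ≤ 1`
for all `τ < T` and `a τ ≤ (4/π²)·(τ₀ − τ + δ)⁻⁴` whenever `|τ − τ₀| ≥ 2`, then
`∑_{τ=0}^{T−1} a τ·(τ₀ − τ + δ)² ≤ 11/4 + 16/π²`. -/
theorem stmt_8 (T : ℕ) (hT : 1 ≤ T) (τ₀ : ℕ) (hτ₀ : τ₀ < T)
    (δ : ℝ) (hδ : |δ| ≤ 1 / 2) (a : ℕ → ℝ)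
    (ha : ∀ τ < T, a τ ∈ Set.Icc (0 : ℝ) 1)
    (ha' : ∀ τ < T, 2 ≤ |(τ : ℝ) - (τ₀ : ℝ)| →
      a τ ≤ (4 / π ^ 2) / ((τ₀ : ℝ) - (τ : ℝ) + δ) ^ 4) :
    ∑ τ ∈ Finset.range T, a τ * ((τ₀ : ℝ) - (τ : ℝ) + δ) ^ 2 ≤ 11 / 4 + 16 / π ^ 2 :=
  stmt_8_general T τ₀ hτ₀ δ hδ a ha ha'
end

section
/- Let T ≥ 1 be an integer, let τ₀ ∈ {0, 1, …, T−1}, let δ be a real number with |δ| ≤ 1/2, and let a : {0, 1, …, T−1} → [0, 1] be such that a_τ ≤ (4/π²)·(τ₀ − τ + δ)^{−4} for every τ with |τ − τ₀| ≥ 2. Then ∑_{τ=0}^{T−1} a_τ·|τ₀ − τ + δ| ≤ 7/2 + 16/π². -/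
open scoped Real
open Finset

/-! The three terms with `|τ - τ₀| ≤ 1` contribute at most `1/2 + 3/2 + 3/2`, since `a ≤ 1` and
`|δ| ≤ 1/2`. At distance `d ≥ 2` the quartic decay gives `a·|x| ≤ (4/π²)/|x|³` with
`|x| ≥ d - 1/2`, and `(d - 1/2)³ ≥ (d - 1)d`; the bounds `(4/π²)/((d - 1)d)` telescope, so each
tail contributes at most `4/π²`. -/

theorem sum_range_one_div_mul_le_one (n : ℕ) :
    ∑ j ∈ range n, 1 / (((j : ℝ) + 1) * ((j : ℝ) + 2)) ≤ 1 := by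
  have htel : ∀ j : ℕ, 1 / (((j : ℝ) + 1) * ((j : ℝ) + 2))
      = 1 / ((j : ℝ) + 1) - 1 / (((j + 1 : ℕ) : ℝ) + 1) := by
    intro j
    push_cast
    field_simp
    ring
  simp_rw [htel, sum_range_sub' (fun j : ℕ => 1 / ((j : ℝ) + 1))]
  rw [Nat.cast_zero, zero_add, one_div_one]
  exact sub_le_self _ (by positivity)

theorem sum_Ico_one_div_mul_le_one (m n : ℕ) :
    ∑ τ ∈ Ico (m + 2) n, 1 / (((τ : ℝ) - m - 1) * ((τ : ℝ) - m)) ≤ 1 := by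
  rw [sum_Ico_eq_sum_range]
  convert sum_range_one_div_mul_le_one (n - (m + 2)) using 4 with j <;> push_cast <;> ring

theorem sum_range_sub_one_one_div_mul_le_one (m : ℕ) :
    ∑ τ ∈ range (m - 1), 1 / (((m : ℝ) - τ - 1) * ((m : ℝ) - τ)) ≤ 1 := by
  rw [← sum_range_reflect]
  convert sum_range_one_div_mul_le_one (m - 1) using 2 with j hj
  rw [mem_range] at hj
  rw [show m - 1 - 1 - j = m - (j + 2) by omega, Nat.cast_sub (by omega : j + 2 ≤ m)]
  push_cast
  ring

theorem mul_abs_le_of_le_div_pow_four {a c x d : ℝ} (hc : 0 ≤ c)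
    (hax : a ≤ c / x ^ 4) (hd : 2 ≤ d) (hxd : d - 1 / 2 ≤ |x|) :
    a * |x| ≤ c / ((d - 1) * d) := by
  have hx : 0 < |x| := by linarith
  have hcube : (d - 1) * d ≤ |x| ^ 3 := by nlinarith [mul_le_mul hxd hxd (by linarith) hx.le]
  calc a * |x| ≤ c / |x| ^ 4 * |x| := by
        rw [← Even.pow_abs (by decide)] at hax
        exact mul_le_mul_of_nonneg_right hax hx.le
    _ = c / |x| ^ 3 := by field_simp
    _ ≤ c / ((d - 1) * d) :=
      div_le_div_of_nonneg_left hc (mul_pos (by linarith) (by linarith)) hcube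

section Tails

variable {a : ℕ → ℝ} {c δ : ℝ} {m : ℕ}

theorem sum_Ico_mul_abs_le (n : ℕ) (hc : 0 ≤ c) (hδ : |δ| ≤ 1 / 2)
    (ha : ∀ τ ∈ Ico (m + 2) n, a τ ≤ c / ((m : ℝ) - τ + δ) ^ 4) :
    ∑ τ ∈ Ico (m + 2) n, a τ * |(m : ℝ) - τ + δ| ≤ c := by
  calc ∑ τ ∈ Ico (m + 2) n, a τ * |(m : ℝ) - τ + δ|
      ≤ ∑ τ ∈ Ico (m + 2) n, c * (1 / (((τ : ℝ) - m - 1) * ((τ : ℝ) - m))) := by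
        refine sum_le_sum fun τ hτ => ?_
        have hd : ((m + 2 : ℕ) : ℝ) ≤ τ := Nat.cast_le.2 (mem_Ico.1 hτ).1
        push_cast at hd
        rw [mul_one_div]
        refine mul_abs_le_of_le_div_pow_four hc (ha τ hτ) (by linarith) ?_
        rw [abs_le] at hδ
        exact (by linarith : (τ : ℝ) - m - 1 / 2 ≤ -(m - τ + δ)).trans (neg_le_abs _)
    _ = c * ∑ τ ∈ Ico (m + 2) n, 1 / (((τ : ℝ) - m - 1) * ((τ : ℝ) - m)) := (mul_sum ..).symm
    _ ≤ c := mul_le_of_le_one_right hc (sum_Ico_one_div_mul_le_one m n)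

theorem sum_range_sub_one_mul_abs_le (hc : 0 ≤ c) (hδ : |δ| ≤ 1 / 2)
    (ha : ∀ τ ∈ range (m - 1), a τ ≤ c / ((m : ℝ) - τ + δ) ^ 4) :
    ∑ τ ∈ range (m - 1), a τ * |(m : ℝ) - τ + δ| ≤ c := by
  calc ∑ τ ∈ range (m - 1), a τ * |(m : ℝ) - τ + δ|
      ≤ ∑ τ ∈ range (m - 1), c * (1 / (((m : ℝ) - τ - 1) * ((m : ℝ) - τ))) := by
        refine sum_le_sum fun τ hτ => ?_
        have hd : ((τ + 2 : ℕ) : ℝ) ≤ m := Nat.cast_le.2 (by have := mem_range.1 hτ; omega)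
        push_cast at hd
        rw [mul_one_div]
        refine mul_abs_le_of_le_div_pow_four hc (ha τ hτ) (by linarith) ?_
        rw [abs_le] at hδ
        exact (by linarith : (m : ℝ) - τ - 1 / 2 ≤ m - τ + δ).trans (le_abs_self _)
    _ = c * ∑ τ ∈ range (m - 1), 1 / (((m : ℝ) - τ - 1) * ((m : ℝ) - τ)) := (mul_sum ..).symm
    _ ≤ c := mul_le_of_le_one_right hc (sum_range_sub_one_one_div_mul_le_one m)

end Tails

theorem sum_le_of_subset_Icc_sub_one_add_one {s : Finset ℕ} {m : ℕ} {f : ℕ → ℝ} {A B : ℝ}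
    (hm : m ∈ s) (hs : s ⊆ Icc (m - 1) (m + 1)) (hfm : f m ≤ A)
    (hf : ∀ τ ∈ s, f τ ≤ B) (hB : 0 ≤ B) :
    ∑ τ ∈ s, f τ ≤ A + 2 * B := by
  have hcard : #(s.erase m) ≤ 2 := by
    refine (card_le_card (t := {m - 1, m + 1}) fun τ hτ => ?_).trans card_le_two
    have := hs (mem_of_mem_erase hτ)
    simp only [mem_Icc, mem_insert, mem_singleton] at this ⊢
    have := ne_of_mem_erase hτ
    omega
  have hrest : ∑ τ ∈ s.erase m, f τ ≤ 2 * B :=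
    calc ∑ τ ∈ s.erase m, f τ ≤ #(s.erase m) • B :=
          sum_le_card_nsmul _ _ _ fun τ hτ => hf τ (mem_of_mem_erase hτ)
      _ ≤ 2 * B := by rw [nsmul_eq_mul]; gcongr; exact_mod_cast hcard
  rw [← add_sum_erase s f hm]
  linarith

theorem abs_natCast_sub_add_le {m τ : ℕ} {δ : ℝ} (hm : m ≤ τ + 1) (hτ : τ ≤ m + 1)
    (hδ : |δ| ≤ 1 / 2) : |(m : ℝ) - τ + δ| ≤ 3 / 2 := by
  have hm' : (m : ℝ) ≤ τ + 1 := by exact_mod_cast hm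
  have hτ' : (τ : ℝ) ≤ m + 1 := by exact_mod_cast hτ
  rw [abs_le] at hδ ⊢
  constructor <;> linarith

theorem two_le_abs_natCast_sub {τ m : ℕ} (h : τ + 2 ≤ m ∨ m + 2 ≤ τ) :
    2 ≤ |(τ : ℝ) - m| := by
  rw [le_abs]
  rcases h with h | h
  · have h' : (τ : ℝ) + 2 ≤ m := by exact_mod_cast h
    exact Or.inr (by linarith)
  · have h' : (m : ℝ) + 2 ≤ τ := by exact_mod_cast h
    exact Or.inl (by linarith)

theorem stmt_9_general (T : ℕ) (τ₀ : ℕ) (hτ₀ : τ₀ < T)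
    (δ : ℝ) (hδ : |δ| ≤ 1 / 2) (a : ℕ → ℝ)
    (ha : ∀ τ < T, a τ ∈ Set.Icc (0 : ℝ) 1)
    (ha' : ∀ τ < T, 2 ≤ |(τ : ℝ) - (τ₀ : ℝ)| →
      a τ ≤ (4 / π ^ 2) / ((τ₀ : ℝ) - (τ : ℝ) + δ) ^ 4) :
    ∑ τ ∈ Finset.range T, a τ * |(τ₀ : ℝ) - (τ : ℝ) + δ| ≤ 7 / 2 + 16 / π ^ 2 := by
  have hc : 0 ≤ 4 / π ^ 2 := by positivity
  have hsub : range (τ₀ - 1) ∪ Ico (τ₀ + 2) T ⊆ range T := by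
    intro τ; simp only [mem_union, mem_range, mem_Ico]; omega
  have hdisj : Disjoint (range (τ₀ - 1)) (Ico (τ₀ + 2) T) := by
    rw [disjoint_left]; intro τ; simp only [mem_range, mem_Ico]; omega
  have hnear : ∑ τ ∈ range T \ (range (τ₀ - 1) ∪ Ico (τ₀ + 2) T),
      a τ * |(τ₀ : ℝ) - τ + δ| ≤ 1 / 2 + 2 * (3 / 2) := by
    refine sum_le_of_subset_Icc_sub_one_add_one (m := τ₀)
      (by simp only [mem_sdiff, mem_union, mem_range, mem_Ico]; omega) ?_ ?_ ?_ (by norm_num)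
    · intro τ; simp only [mem_sdiff, mem_union, mem_range, mem_Ico, mem_Icc]; omega
    · rw [sub_self, zero_add]
      exact (mul_le_of_le_one_left (abs_nonneg δ) (ha τ₀ hτ₀).2).trans hδ
    · intro τ hτ
      simp only [mem_sdiff, mem_union, mem_range, mem_Ico] at hτ
      exact (mul_le_of_le_one_left (abs_nonneg _) (ha τ hτ.1).2).trans
        (abs_natCast_sub_add_le (by omega) (by omega) hδ)
  have hleft := sum_range_sub_one_mul_abs_le (a := a) (m := τ₀) hc hδ fun τ hτ => by
    rw [mem_range] at hτ
    exact ha' τ (by omega) (two_le_abs_natCast_sub (Or.inl (by omega)))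
  have hright := sum_Ico_mul_abs_le (a := a) (m := τ₀) T hc hδ fun τ hτ => by
    rw [mem_Ico] at hτ
    exact ha' τ hτ.2 (two_le_abs_natCast_sub (Or.inr hτ.1))
  rw [← sum_sdiff hsub, sum_union hdisj]
  have : 4 / π ^ 2 + 4 / π ^ 2 ≤ 16 / π ^ 2 := by rw [← add_div]; gcongr; norm_num
  linarith

/-- First absolute moment of the QPE mismatch in the HHL analysis: if `0 ≤ a τ ≤ 1`
for all `τ < T` and `a τ ≤ (4/π²)·(τ₀ − τ + δ)⁻⁴` whenever `|τ − τ₀| ≥ 2`, then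
`∑_{τ=0}^{T−1} a τ·|τ₀ − τ + δ| ≤ 7/2 + 16/π²`. -/
theorem stmt_9 (T : ℕ) (hT : 1 ≤ T) (τ₀ : ℕ) (hτ₀ : τ₀ < T)
    (δ : ℝ) (hδ : |δ| ≤ 1 / 2) (a : ℕ → ℝ)
    (ha : ∀ τ < T, a τ ∈ Set.Icc (0 : ℝ) 1)
    (ha' : ∀ τ < T, 2 ≤ |(τ : ℝ) - (τ₀ : ℝ)| →
      a τ ≤ (4 / π ^ 2) / ((τ₀ : ℝ) - (τ : ℝ) + δ) ^ 4) :
    ∑ τ ∈ Finset.range T, a τ * |(τ₀ : ℝ) - (τ : ℝ) + δ| ≤ 7 / 2 + 16 / π ^ 2 :=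
  stmt_9_general T τ₀ hτ₀ δ hδ a ha ha'
end

section
/- Let κ ≥ 1, let j₀ ≥ 1 be a real number, and let ε_inv, ε_rect be real numbers with 0 < ε_rect ≤ ε_inv ≤ 1 and ε_rect ≤ κ/(2j₀). Let P_inv : [−1, 1] → ℝ satisfy: |P_inv(x)| ≤ 4j₀ for all x ∈ [−1, 1], and |P_inv(x)| ≤ κ + ε_inv whenever 1/(2κ) ≤ |x| ≤ 1. Let P_rect : [−1, 1] → ℝ satisfy: |P_rect(x)| ≤ 1 for all x ∈ [−1, 1], |P_rect(x)| ≤ ε_rect whenever 1/κ ≤ |x| ≤ 1, and |1 − P_rect(x)| ≤ ε_rect whenever |x| ≤ 1/(2κ). Define P_MI(x) := (1 − P_rect(x))·P_inv(x) / (2κ·(1 + ε_inv)). Then |P_MI(x)| ≤ 1 for all x ∈ [−1, 1]. -/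
/-- The matrix-inversion polynomial `P_MI(x) = (1 − P_rect(x))·P_inv(x)/(2κ(1+ε_inv))`
is bounded by 1 on `[−1,1]`, given the stated bounds on `P_inv` and `P_rect`. -/
theorem stmt_11 (κ j₀ εinv εrect : ℝ) (hκ : 1 ≤ κ) (hj₀ : 1 ≤ j₀)
    (hrect_pos : 0 < εrect) (hrect_le : εrect ≤ εinv) (hinv_le : εinv ≤ 1)
    (hrect_j₀ : εrect ≤ κ / (2 * j₀))
    (Pinv Prect : ℝ → ℝ)
    (hPinv_glob : ∀ x ∈ Set.Icc (-1 : ℝ) 1, |Pinv x| ≤ 4 * j₀)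
    (hPinv_mid : ∀ x ∈ Set.Icc (-1 : ℝ) 1, 1 / (2 * κ) ≤ |x| → |Pinv x| ≤ κ + εinv)
    (hPrect_glob : ∀ x ∈ Set.Icc (-1 : ℝ) 1, |Prect x| ≤ 1)
    (hPrect_out : ∀ x ∈ Set.Icc (-1 : ℝ) 1, 1 / κ ≤ |x| → |Prect x| ≤ εrect)
    (hPrect_in : ∀ x ∈ Set.Icc (-1 : ℝ) 1, |x| ≤ 1 / (2 * κ) → |1 - Prect x| ≤ εrect) :
    ∀ x ∈ Set.Icc (-1 : ℝ) 1,
      |(1 - Prect x) * Pinv x / (2 * κ * (1 + εinv))| ≤ 1 := by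
  intro x hx
  have hεinv : 0 < εinv := lt_of_lt_of_le hrect_pos hrect_le
  have hden : 0 < 2 * κ * (1 + εinv) := by nlinarith
  rw [abs_div, abs_of_pos hden, div_le_one hden, abs_mul]
  rcases le_or_gt (|x|) (1 / (2 * κ)) with h | h
  · -- near the origin: use global bound on Pinv and hPrect_in
    have h1 := hPrect_in x hx h
    have h2 := hPinv_glob x hx
    have hPinv_nn := abs_nonneg (Pinv x)
    have h3 : εrect * (4 * j₀) ≤ κ / (2 * j₀) * (4 * j₀) := by
      have : (0:ℝ) ≤ 4 * j₀ := by linarith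
      exact mul_le_mul_of_nonneg_right hrect_j₀ this
    have hj : κ / (2 * j₀) * (4 * j₀) = 2 * κ := by
      field_simp; ring
    have : |1 - Prect x| * |Pinv x| ≤ εrect * (4 * j₀) :=
      mul_le_mul h1 h2 hPinv_nn hrect_pos.le
    nlinarith
  · -- away from origin: use hPinv_mid and the trivial bound on 1 - Prect
    have h1 := hPinv_mid x hx h.le
    have h2 := hPrect_glob x hx
    have h3 : |1 - Prect x| ≤ 2 := by
      calc |1 - Prect x| ≤ |(1:ℝ)| + |Prect x| := abs_sub (1:ℝ) (Prect x)
        _ ≤ 1 + 1 := by rw [abs_one]; linarith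
        _ = 2 := by norm_num
    have hPinv_nn := abs_nonneg (Pinv x)
    have : |1 - Prect x| * |Pinv x| ≤ 2 * (κ + εinv) :=
      mul_le_mul h3 h1 hPinv_nn (by norm_num)
    nlinarith
end

section
/- Let κ ≥ 1 and let ε_inv, ε_rect be real numbers with 0 < ε_rect ≤ ε_inv ≤ 1. Let P_inv : [−1, 1] → ℝ satisfy |P_inv(x) − 1/x| ≤ ε_inv and |P_inv(x)| ≤ κ + ε_inv for all x with 1/κ ≤ |x| ≤ 1, and let P_rect : [−1, 1] → ℝ satisfy |P_rect(x)| ≤ ε_rect for all x with 1/κ ≤ |x| ≤ 1. Define P_MI(x) := (1 − P_rect(x))·P_inv(x) / (2κ·(1 + ε_inv)). Then for every x with 1/κ ≤ |x| ≤ 1, |P_MI(x) − 1/(2κx)| ≤ 2·ε_inv. -/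
/-!
Write `p = P_inv(x)`, `r = P_rect(x)` and `ε = ε_inv`. On `D_κ` we have `|1/x| ≤ κ`, hence
`|p| ≤ κ + ε`, and the numerator of `P_MI(x) − 1/(2κx)` splits as
`(1 − r)p − (1 + ε)/x = (p − 1/x) − rp − ε/x`, of size at most `ε + ε(κ + ε) + εκ`.
Dividing by `2κ(1 + ε)` leaves at most `2ε` because `κ ≥ 1`.
-/

lemma abs_one_div_le_of_one_div_le_abs {κ x : ℝ} (hκ : 0 < κ) (hx : 1 / κ ≤ |x|) :
    |1 / x| ≤ κ := by
  rw [one_div, abs_inv]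
  exact inv_le_of_inv_le₀ hκ (by rwa [← one_div])

lemma abs_le_add_of_abs_sub_one_div_le {κ ε x p : ℝ} (hκ : 0 < κ) (hx : 1 / κ ≤ |x|)
    (hp : |p - 1 / x| ≤ ε) : |p| ≤ κ + ε := by
  have := abs_sub_abs_le_abs_sub p (1 / x)
  linarith [abs_one_div_le_of_one_div_le_abs hκ hx]

lemma abs_one_sub_mul_sub_div_le {κ ε x p r : ℝ} (hκ : 0 < κ) (hε : 0 ≤ ε)
    (hx : 1 / κ ≤ |x|) (hp : |p - 1 / x| ≤ ε) (hr : |r| ≤ ε) :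
    |(1 - r) * p - (1 + ε) / x| ≤ ε * (1 + 2 * κ + ε) := by
  have hx_inv := abs_one_div_le_of_one_div_le_abs hκ hx
  have hrp : |-(r * p)| ≤ ε * (κ + ε) := by
    rw [abs_neg, abs_mul]
    exact mul_le_mul hr (abs_le_add_of_abs_sub_one_div_le hκ hx hp) (abs_nonneg _) hε
  have hεx : |-(ε * (1 / x))| ≤ ε * κ := by
    rw [abs_neg, abs_mul, abs_of_nonneg hε]
    exact mul_le_mul_of_nonneg_left hx_inv hε
  calc |(1 - r) * p - (1 + ε) / x|
      = |(p - 1 / x) + -(r * p) + -(ε * (1 / x))| := by ring_nf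
    _ ≤ |p - 1 / x| + |-(r * p)| + |-(ε * (1 / x))| := abs_add_three _ _ _
    _ ≤ ε + ε * (κ + ε) + ε * κ := by gcongr
    _ = ε * (1 + 2 * κ + ε) := by ring

lemma abs_one_sub_mul_div_sub_inv_le {κ ε x p r : ℝ} (hκ : 1 ≤ κ) (hε : 0 ≤ ε)
    (hx : 1 / κ ≤ |x|) (hp : |p - 1 / x| ≤ ε) (hr : |r| ≤ ε) :
    |(1 - r) * p / (2 * κ * (1 + ε)) - 1 / (2 * κ * x)| ≤ 2 * ε := by
  have hκ0 : 0 < κ := zero_lt_one.trans_le hκ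
  have hx0 : x ≠ 0 := abs_pos.mp ((one_div_pos.mpr hκ0).trans_le hx)
  have hden : 0 < 2 * κ * (1 + ε) := by positivity
  have hnum := abs_one_sub_mul_sub_div_le hκ0 hε hx hp hr
  have hsplit : (1 - r) * p / (2 * κ * (1 + ε)) - 1 / (2 * κ * x)
      = ((1 - r) * p - (1 + ε) / x) / (2 * κ * (1 + ε)) := by
    field_simp
  rw [hsplit, abs_div, abs_of_pos hden, div_le_iff₀ hden]
  nlinarith [mul_nonneg hε (sub_nonneg.mpr hκ), mul_nonneg (mul_nonneg hε hε) hκ0.le]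

theorem stmt_12_general (κ εinv εrect : ℝ) (hκ : 1 ≤ κ)
    (hrect_pos : 0 < εrect) (hrect_le : εrect ≤ εinv)
    (Pinv Prect : ℝ → ℝ)
    (hPinv_close : ∀ x ∈ Set.Icc (-1 : ℝ) 1, 1 / κ ≤ |x| → |Pinv x - 1 / x| ≤ εinv)
    (hPrect : ∀ x ∈ Set.Icc (-1 : ℝ) 1, 1 / κ ≤ |x| → |Prect x| ≤ εrect) :
    ∀ x ∈ Set.Icc (-1 : ℝ) 1, 1 / κ ≤ |x| →
      |(1 - Prect x) * Pinv x / (2 * κ * (1 + εinv)) - 1 / (2 * κ * x)| ≤ 2 * εinv :=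
  fun x hx hxκ => abs_one_sub_mul_div_sub_inv_le hκ (hrect_pos.le.trans hrect_le) hxκ
    (hPinv_close x hx hxκ) ((hPrect x hx hxκ).trans hrect_le)

/-- The matrix-inversion polynomial `P_MI(x) = (1 − P_rect(x))·P_inv(x)/(2κ(1+ε_inv))`
approximates `1/(2κx)` to accuracy `2ε_inv` on `1/κ ≤ |x| ≤ 1`. -/
theorem stmt_12 (κ εinv εrect : ℝ) (hκ : 1 ≤ κ)
    (hrect_pos : 0 < εrect) (hrect_le : εrect ≤ εinv) (hinv_le : εinv ≤ 1)
    (Pinv Prect : ℝ → ℝ)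
    (hPinv_close : ∀ x ∈ Set.Icc (-1 : ℝ) 1, 1 / κ ≤ |x| → |Pinv x - 1 / x| ≤ εinv)
    (hPinv_bd : ∀ x ∈ Set.Icc (-1 : ℝ) 1, 1 / κ ≤ |x| → |Pinv x| ≤ κ + εinv)
    (hPrect : ∀ x ∈ Set.Icc (-1 : ℝ) 1, 1 / κ ≤ |x| → |Prect x| ≤ εrect) :
    ∀ x ∈ Set.Icc (-1 : ℝ) 1, 1 / κ ≤ |x| →
      |(1 - Prect x) * Pinv x / (2 * κ * (1 + εinv)) - 1 / (2 * κ * x)| ≤ 2 * εinv :=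
  stmt_12_general κ εinv εrect hκ hrect_pos hrect_le Pinv Prect hPinv_close hPrect
end

section
/- Let κ ≥ 1, let A be an N×N invertible Hermitian complex matrix all of whose eigenvalues lie in D_κ := [−1, −1/κ] ∪ [1/κ, 1], let ε′ be a real number with 0 ≤ ε′ < 1/(2κ), and let g : ℝ → ℝ satisfy |g(λ) − 1/(2κλ)| ≤ ε′ for every eigenvalue λ of A. Then for every b ∈ ℂ^N with ‖b‖ = 1, ‖g(A)·b‖ ≥ (1 − 2κε′)/(2κ), where g(A) is defined by applying g to the eigenvalues of A via the spectral decomposition. -/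
/-- Success-probability lower bound for the QSVT linear solver: if all eigenvalues
of an invertible Hermitian `A` lie in `D_κ = [−1, −1/κ] ∪ [1/κ, 1]`,
`0 ≤ ε′ < 1/(2κ)` and `|g(λ) − 1/(2κλ)| ≤ ε′` on the spectrum of `A`, then for
every unit vector `b` (Euclidean 2-norm), `‖g(A)b‖ ≥ (1 − 2κε′)/(2κ)`, where
`g(A)` applies `g` to the eigenvalues via the spectral decomposition. -/
theorem stmt_15 (N : ℕ) (κ : ℝ) (hκ : 1 ≤ κ)
    (A : Matrix (Fin N) (Fin N) ℂ) (hA : A.IsHermitian) (hdet : IsUnit A.det)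
    (heig : ∀ i, hA.eigenvalues i ∈
      Set.Icc (-1 : ℝ) (-(1 / κ)) ∪ Set.Icc (1 / κ) 1)
    (ε' : ℝ) (hε'0 : 0 ≤ ε') (hε'1 : ε' < 1 / (2 * κ)) (g : ℝ → ℝ)
    (hg : ∀ i, |g (hA.eigenvalues i) - 1 / (2 * κ * hA.eigenvalues i)| ≤ ε')
    (b : EuclideanSpace ℂ (Fin N)) (hb : ‖b‖ = 1) :
    ‖Matrix.toEuclideanLin (hA.cfc g) b‖ ≥ (1 - 2 * κ * ε') / (2 * κ) := by
  have hκ0 : (0:ℝ) < κ := lt_of_lt_of_le one_pos hκ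
  set c : ℝ := (1 - 2 * κ * ε') / (2 * κ) with hc
  have hc0 : 0 ≤ c := by
    apply div_nonneg _ (by positivity)
    have h : 2 * κ * ε' < 2 * κ * (1 / (2 * κ)) :=
      mul_lt_mul_of_pos_left hε'1 (by positivity)
    rw [mul_one_div, div_self (by positivity : (2:ℝ) * κ ≠ 0)] at h
    linarith
  -- eigenvalue bound
  have key : ∀ i, c ≤ |g (hA.eigenvalues i)| := by
    intro i
    set l := hA.eigenvalues i with hl
    have hlabs : 1 / κ ≤ |l| ∧ |l| ≤ 1 := by
      rcases heig i with h | h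
      · have hdiv : (0:ℝ) < 1 / κ := by positivity
        rw [abs_of_nonpos (by linarith [h.2] : l ≤ 0)]
        exact ⟨by linarith [h.2], by linarith [h.1]⟩
      · rw [abs_of_nonneg (le_trans (by positivity) h.1)]
        exact ⟨h.1, h.2⟩
    have h1 : 1 / (2 * κ) ≤ |1 / (2 * κ * l)| := by
      rw [abs_div, abs_one, abs_mul, abs_of_nonneg (by positivity : (0:ℝ) ≤ 2 * κ)]
      have hlpos : (0:ℝ) < |l| := lt_of_lt_of_le (by positivity) hlabs.1
      apply div_le_div_of_nonneg_left one_pos.le (by positivity)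
      calc 2 * κ * |l| ≤ 2 * κ * 1 :=
            mul_le_mul_of_nonneg_left hlabs.2 (by positivity)
        _ = 2 * κ := by ring
    have h2 := hg i
    have h3 : |1 / (2 * κ * l)| - |g l| ≤ ε' := by
      have h4 := abs_sub_abs_le_abs_sub (1 / (2 * κ * l)) (g l)
      rw [abs_sub_comm] at h2
      linarith
    have h5 : 1 / (2 * κ) - ε' ≤ |g l| := by linarith
    have hceq : c = 1 / (2 * κ) - ε' := by
      rw [hc]; field_simp
    linarith
  -- decompose g(A)
  set U : Matrix (Fin N) (Fin N) ℂ := (hA.eigenvectorUnitary : Matrix (Fin N) (Fin N) ℂ) with hU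
  have hUmem : U ∈ Matrix.unitaryGroup (Fin N) ℂ := (hA.eigenvectorUnitary).2
  set D : Matrix (Fin N) (Fin N) ℂ :=
    Matrix.diagonal (Complex.ofReal ∘ g ∘ hA.eigenvalues) with hD
  have hcfc : hA.cfc g = U * D * star U := rfl
  -- pass to CLMs
  set T := Matrix.toEuclideanCLM (n := Fin N) (𝕜 := ℂ) with hT
  have happly : ∀ (M : Matrix (Fin N) (Fin N) ℂ) (x : EuclideanSpace ℂ (Fin N)),
      Matrix.toEuclideanLin M x = T M x := by
    intro M x
    rw [← Matrix.coe_toEuclideanCLM_eq_toEuclideanLin]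
    rfl
  have hTU : T U ∈ unitary (EuclideanSpace ℂ (Fin N) →L[ℂ] EuclideanSpace ℂ (Fin N)) := by
    constructor
    · rw [← map_star, ← map_mul, Unitary.star_mul_self_of_mem hUmem, map_one]
    · rw [← map_star, ← map_mul, Unitary.mul_star_self_of_mem hUmem, map_one]
  set v : EuclideanSpace ℂ (Fin N) := T (star U) b with hv
  have hvnorm : ‖v‖ = 1 := by
    have : ‖T (star U) b‖ = ‖b‖ := by
      have hmem : star (T U) ∈ unitary (EuclideanSpace ℂ (Fin N) →L[ℂ] EuclideanSpace ℂ (Fin N)) :=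
        Unitary.star_mem hTU
      rw [← map_star] at hmem
      exact ContinuousLinearMap.norm_map_of_mem_unitary hmem b
    rw [hv, this, hb]
  have hsplit : Matrix.toEuclideanLin (hA.cfc g) b = T U (T D v) := by
    rw [happly, hcfc, map_mul, map_mul]
    rfl
  rw [hsplit, ContinuousLinearMap.norm_map_of_mem_unitary hTU]
  -- norm of diagonal action
  have hDv : ∀ i, (T D v) i = (Complex.ofReal (g (hA.eigenvalues i))) * v i := by
    intro i
    have := Matrix.ofLp_toEuclideanCLM (n := Fin N) (𝕜 := ℂ) D v
    have h2 : (T D v) i = (Matrix.mulVec D (WithLp.equiv 2 _ v)) i := congrFun this i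
    rw [h2, Matrix.mulVec_diagonal]
    rfl
  have hnorm2 : c * ‖v‖ ≤ ‖T D v‖ := by
    rw [EuclideanSpace.norm_eq, EuclideanSpace.norm_eq, ← Real.sqrt_sq hc0,
      ← Real.sqrt_mul (by positivity)]
    apply Real.sqrt_le_sqrt
    rw [Finset.mul_sum]
    apply Finset.sum_le_sum
    intro i _
    rw [hDv i, norm_mul, mul_pow, Complex.norm_real, Real.norm_eq_abs]
    have hvi : (0:ℝ) ≤ ‖v i‖ ^ 2 := by positivity
    have hle : c ^ 2 ≤ |g (hA.eigenvalues i)| ^ 2 := pow_le_pow_left₀ hc0 (key i) 2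
    exact mul_le_mul_of_nonneg_right hle hvi
  rw [hvnorm, mul_one] at hnorm2
  exact hnorm2
end

section
/- Let κ ≥ 1, let A be an N×N invertible Hermitian complex matrix all of whose eigenvalues lie in D_κ := [−1, −1/κ] ∪ [1/κ, 1], let ε′ be a real number with 0 < ε′ < 1/(2κ), and let g : ℝ → ℝ satisfy |g(λ) − 1/(2κλ)| ≤ ε′ for every eigenvalue λ of A. Then for every b ∈ ℂ^N with ‖b‖ = 1, the vector g(A)·b is nonzero and ‖A⁻¹b/‖A⁻¹b‖ − g(A)·b/‖g(A)·b‖‖ ≤ 4κε′, where g(A) is defined by applying g to the eigenvalues of A via the spectral decomposition. -/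
/-!
Put `u = A⁻¹ b` and `w = 2κ g(A) b`. Both are spectral functions of `A` applied to `b`, and
`|λ⁻¹ - 2κ g(λ)| ≤ 2κε'` on the spectrum, so `‖u - w‖ ≤ 2κε'`; since `‖A‖ ≤ 1`, also
`‖u‖ ≥ ‖A u‖ = 1`. Hence `w ≠ 0` because `2κε' < 1`, and normalizing, which ignores the positive
factor `2κ`, costs at most a factor `2 / ‖u‖ ≤ 2`.
-/

section Normalize

variable {E : Type*} [NormedAddCommGroup E] [NormedSpace ℂ E]

theorem inv_norm_smul_smul_of_pos {t : ℝ} (ht : 0 < t) (x : E) :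
    (‖(t : ℂ) • x‖ : ℂ)⁻¹ • (t : ℂ) • x = (‖x‖ : ℂ)⁻¹ • x := by
  rcases eq_or_ne x 0 with rfl | hx
  · simp
  have hx' : (‖x‖ : ℂ) ≠ 0 := by exact_mod_cast norm_ne_zero_iff.mpr hx
  have ht' : (t : ℂ) ≠ 0 := by exact_mod_cast ht.ne'
  rw [norm_smul, Complex.norm_real, Real.norm_of_nonneg ht.le, smul_smul]
  congr 1
  push_cast
  field_simp

theorem norm_inv_norm_smul_sub_inv_norm_smul_le {x y : E} (hx : x ≠ 0) (hy : y ≠ 0) :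
    ‖(‖x‖ : ℂ)⁻¹ • x - (‖y‖ : ℂ)⁻¹ • y‖ ≤ 2 * ‖x - y‖ / ‖x‖ := by
  have hx' : 0 < ‖x‖ := norm_pos_iff.mpr hx
  have hy' : 0 < ‖y‖ := norm_pos_iff.mpr hy
  have hsplit : (‖x‖ : ℂ)⁻¹ • x - (‖y‖ : ℂ)⁻¹ • y
      = (‖x‖ : ℂ)⁻¹ • (x - y) + ((‖x‖⁻¹ - ‖y‖⁻¹ : ℝ) : ℂ) • y := by
    push_cast
    rw [smul_sub, sub_smul]
    abel
  have hscale : ‖((‖x‖⁻¹ - ‖y‖⁻¹ : ℝ) : ℂ) • y‖ = |‖y‖ - ‖x‖| / ‖x‖ := by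
    rw [norm_smul, Complex.norm_real, Real.norm_eq_abs,
      show ‖x‖⁻¹ - ‖y‖⁻¹ = (‖y‖ - ‖x‖) / (‖x‖ * ‖y‖) by field_simp, abs_div,
      abs_of_pos (mul_pos hx' hy')]
    field_simp
  calc ‖(‖x‖ : ℂ)⁻¹ • x - (‖y‖ : ℂ)⁻¹ • y‖
      ≤ ‖(‖x‖ : ℂ)⁻¹ • (x - y)‖ + ‖((‖x‖⁻¹ - ‖y‖⁻¹ : ℝ) : ℂ) • y‖ :=
        hsplit ▸ norm_add_le _ _
    _ = ‖x - y‖ / ‖x‖ + |‖y‖ - ‖x‖| / ‖x‖ := by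
        rw [hscale, norm_smul, norm_inv, Complex.norm_real, norm_norm, inv_mul_eq_div]
    _ ≤ ‖x - y‖ / ‖x‖ + ‖x - y‖ / ‖x‖ := by
        gcongr
        rw [norm_sub_rev]
        exact abs_norm_sub_norm_le y x
    _ = 2 * ‖x - y‖ / ‖x‖ := by ring

end Normalize

theorem abs_mem_Icc_of_mem_Icc_union_Icc {a b x : ℝ} (ha : 0 ≤ a)
    (hx : x ∈ Set.Icc (-b) (-a) ∪ Set.Icc a b) : a ≤ |x| ∧ |x| ≤ b := by
  rcases hx with ⟨h₁, h₂⟩ | ⟨h₁, h₂⟩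
  · rw [abs_of_nonpos (by linarith)]
    constructor <;> linarith
  · rw [abs_of_nonneg (by linarith)]
    exact ⟨h₁, h₂⟩

theorem abs_inv_sub_mul_le_of_abs_sub_one_div_le {c t r ε : ℝ} (hc : 0 < c) (ht : t ≠ 0)
    (h : |r - 1 / (c * t)| ≤ ε) : |t⁻¹ - c * r| ≤ c * ε := by
  rw [show t⁻¹ - c * r = c * (1 / (c * t) - r) by field_simp, abs_mul, abs_of_pos hc,
    abs_sub_comm]
  gcongr

namespace Matrix.IsHermitian

variable {n : Type*} [Fintype n] [DecidableEq n] {A : Matrix n n ℂ}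

open scoped Matrix.Norms.L2Operator in
theorem norm_toEuclideanLin_cfc_le (hA : A.IsHermitian) {f : ℝ → ℝ} {c : ℝ} (hc : 0 ≤ c)
    (hf : ∀ i, |f (hA.eigenvalues i)| ≤ c) (v : EuclideanSpace ℂ n) :
    ‖toEuclideanLin (cfc f A) v‖ ≤ c * ‖v‖ := by
  have hnorm : ‖cfc f A‖ ≤ c := norm_cfc_le (a := A) (f := f) hc <| by
    rw [hA.spectrum_real_eq_range_eigenvalues]
    rintro - ⟨i, rfl⟩
    exact hf i
  calc ‖toEuclideanLin (cfc f A) v‖ ≤ ‖cfc f A‖ * ‖v‖ := (cfc f A).l2_opNorm_mulVec v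
    _ ≤ c * ‖v‖ := by gcongr

theorem norm_toEuclideanLin_le (hA : A.IsHermitian) (hA1 : ∀ i, |hA.eigenvalues i| ≤ 1)
    (v : EuclideanSpace ℂ n) : ‖toEuclideanLin A v‖ ≤ ‖v‖ := by
  simpa [cfc_id' ℝ A] using hA.norm_toEuclideanLin_cfc_le (f := fun t => t) zero_le_one hA1 v

theorem norm_le_norm_toEuclideanLin_inv (hA : A.IsHermitian) (hdet : IsUnit A.det)
    (hA1 : ∀ i, |hA.eigenvalues i| ≤ 1) (v : EuclideanSpace ℂ n) :
    ‖v‖ ≤ ‖toEuclideanLin A⁻¹ v‖ := by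
  have hAv : toEuclideanLin A (toEuclideanLin A⁻¹ v) = v := by
    rw [← LinearMap.comp_apply, ← toLpLin_mul_same, mul_nonsing_inv A hdet, toLpLin_one,
      LinearMap.id_apply]
  calc ‖v‖ = ‖toEuclideanLin A (toEuclideanLin A⁻¹ v)‖ := by rw [hAv]
    _ ≤ ‖toEuclideanLin A⁻¹ v‖ := hA.norm_toEuclideanLin_le hA1 _

theorem inv_eq_cfc_inv (hA : A.IsHermitian) (hdet : IsUnit A.det) :
    A⁻¹ = cfc (·⁻¹ : ℝ → ℝ) A := by
  rw [cfc_ringInverse_id (R := ℝ) (a := A) ((isUnit_iff_isUnit_det A).mpr hdet),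
    nonsing_inv_eq_ringInverse]

theorem inv_sub_smul_cfc (hA : A.IsHermitian) (hdet : IsUnit A.det) (c : ℝ) (g : ℝ → ℝ) :
    A⁻¹ - (c : ℂ) • hA.cfc g = cfc (fun t => t⁻¹ - c * g t) A := by
  have hcont (f : ℝ → ℝ) : ContinuousOn f (spectrum ℝ A) := A.finite_real_spectrum.continuousOn f
  rw [cfc_sub _ _ A (hcont _) (hcont _), cfc_const_mul c g A (hcont _), hA.inv_eq_cfc_inv hdet,
    ← hA.cfc_eq, Complex.coe_smul]

end Matrix.IsHermitian

/-- End accuracy guarantee of the QSVT-based quantum linear solver: if all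
eigenvalues of an invertible Hermitian `A` lie in `D_κ = [−1, −1/κ] ∪ [1/κ, 1]`,
`0 < ε′ < 1/(2κ)` and `|g(λ) − 1/(2κλ)| ≤ ε′` on the spectrum of `A`, then for
every unit vector `b` (Euclidean 2-norm), `g(A)b ≠ 0` and the normalized vectors
satisfy `‖A⁻¹b/‖A⁻¹b‖ − g(A)b/‖g(A)b‖‖ ≤ 4κε′`, where `g(A)` applies `g` to the
eigenvalues via the spectral decomposition. -/
theorem stmt_17 (N : ℕ) (κ : ℝ) (hκ : 1 ≤ κ)
    (A : Matrix (Fin N) (Fin N) ℂ) (hA : A.IsHermitian) (hdet : IsUnit A.det)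
    (heig : ∀ i, hA.eigenvalues i ∈
      Set.Icc (-1 : ℝ) (-(1 / κ)) ∪ Set.Icc (1 / κ) 1)
    (ε' : ℝ) (hε'0 : 0 < ε') (hε'1 : ε' < 1 / (2 * κ)) (g : ℝ → ℝ)
    (hg : ∀ i, |g (hA.eigenvalues i) - 1 / (2 * κ * hA.eigenvalues i)| ≤ ε')
    (b : EuclideanSpace ℂ (Fin N)) (hb : ‖b‖ = 1) :
    Matrix.toEuclideanLin (hA.cfc g) b ≠ 0 ∧
    ‖(‖Matrix.toEuclideanLin A⁻¹ b‖ : ℂ)⁻¹ • Matrix.toEuclideanLin A⁻¹ b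
        - (‖Matrix.toEuclideanLin (hA.cfc g) b‖ : ℂ)⁻¹ •
          Matrix.toEuclideanLin (hA.cfc g) b‖ ≤ 4 * κ * ε' := by
  have hκ0 : 0 < κ := by linarith
  have hε'κ : 2 * κ * ε' < 1 := by rwa [lt_div_iff₀ (by positivity), mul_comm] at hε'1
  have habs (i : Fin N) : 1 / κ ≤ |hA.eigenvalues i| ∧ |hA.eigenvalues i| ≤ 1 :=
    abs_mem_Icc_of_mem_Icc_union_Icc (by positivity) (heig i)
  set u := Matrix.toEuclideanLin A⁻¹ b
  set y := Matrix.toEuclideanLin (hA.cfc g) b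
  have hu : 1 ≤ ‖u‖ := hb ▸ hA.norm_le_norm_toEuclideanLin_inv hdet (fun i => (habs i).2) b
  have huy : ‖u - ((2 * κ : ℝ) : ℂ) • y‖ ≤ 2 * κ * ε' := by
    have hspec (i : Fin N) :
        |(hA.eigenvalues i)⁻¹ - 2 * κ * g (hA.eigenvalues i)| ≤ 2 * κ * ε' :=
      abs_inv_sub_mul_le_of_abs_sub_one_div_le (by positivity)
        (abs_pos.mp (lt_of_lt_of_le (by positivity) (habs i).1)) (hg i)
    have := hA.norm_toEuclideanLin_cfc_le (f := fun t => t⁻¹ - 2 * κ * g t)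
      (by positivity : 0 ≤ 2 * κ * ε') hspec b
    rwa [← hA.inv_sub_smul_cfc hdet, map_sub, map_smul, LinearMap.sub_apply,
      LinearMap.smul_apply, hb, mul_one] at this
  have hy : y ≠ 0 := by
    intro hy0
    rw [hy0, smul_zero, sub_zero] at huy
    linarith
  refine ⟨hy, ?_⟩
  rw [← inv_norm_smul_smul_of_pos (by positivity : 0 < 2 * κ) y]
  calc _ ≤ 2 * ‖u - ((2 * κ : ℝ) : ℂ) • y‖ / ‖u‖ :=
        norm_inv_norm_smul_sub_inv_norm_smul_le (norm_pos_iff.mp (by linarith))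
          (smul_ne_zero (by exact_mod_cast (by positivity : 2 * κ ≠ 0)) hy)
    _ ≤ 2 * ‖u - ((2 * κ : ℝ) : ℂ) • y‖ := div_le_self (by positivity) hu
    _ ≤ 4 * κ * ε' := by linarith
end

section
/- Let t > 0 be a real number and let q ≥ 2 be an integer with q ≥ t − 1. Let (a_m)_{m∈ℕ} be a sequence of real numbers satisfying |a_m| ≤ (1/m!)·(t/2)^m for all m. Then 2·∑_{l=0}^{∞} |a_{q+2l}| ≤ (4/(3·√π))·(e·t/(2q))^q. -/
/-!
Since `t ≤ q + 1`, each step `m ↦ m + 2` multiplies the bound `(t/2)^m / m!` by at most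
`((t/2) / (q+1))^2 ≤ 1/4`, so the tail is at most `4/3` times its first term `(t/2)^q / q!`.
Stirling's inequality `q! ≥ √(2πq) (q/e)^q ≥ 2√π (q/e)^q` (for `q ≥ 2`) turns that term into
`(e t / (2q))^q / (2√π)`.
-/

open scoped Nat
open Real

lemma pow_add_div_factorial_le {x : ℝ} (hx : 0 ≤ x) (q n : ℕ) :
    x ^ (q + n) / (q + n)! ≤ x ^ q / q ! * (x / (q + 1)) ^ n := by
  have hfac : (q ! : ℝ) * ((q : ℝ) + 1) ^ n ≤ (q + n)! := by
    exact_mod_cast Nat.factorial_mul_pow_le_factorial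
  calc x ^ (q + n) / (q + n)! ≤ x ^ (q + n) / (q ! * ((q : ℝ) + 1) ^ n) := by gcongr
    _ = x ^ q / q ! * (x / (q + 1)) ^ n := by rw [pow_add, div_pow]; field_simp

lemma two_mul_sqrt_pi_mul_div_exp_pow_le_factorial {q : ℕ} (hq : 2 ≤ q) :
    2 * √π * (q / exp 1) ^ q ≤ q ! := by
  have hsqrt : 2 * √π ≤ √(2 * π * q) := by
    rw [show 2 * √π = √(4 * π) by rw [Real.sqrt_mul (by norm_num)]; norm_num]
    apply Real.sqrt_le_sqrt
    have : (2 : ℝ) ≤ q := by exact_mod_cast hq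
    nlinarith [pi_pos]
  calc 2 * √π * (q / exp 1) ^ q ≤ √(2 * π * q) * (q / exp 1) ^ q := by gcongr
    _ ≤ q ! := Stirling.le_factorial_stirling q

lemma pow_div_factorial_le_of_two_le {x : ℝ} (hx : 0 ≤ x) {q : ℕ} (hq : 2 ≤ q) :
    x ^ q / q ! ≤ (exp 1 * x / q) ^ q / (2 * √π) := by
  have hfac := two_mul_sqrt_pi_mul_div_exp_pow_le_factorial hq
  calc x ^ q / q ! ≤ x ^ q / (2 * √π * (q / exp 1) ^ q) := by gcongr
    _ = (exp 1 * x / q) ^ q / (2 * √π) := by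
      rw [div_pow, div_pow, mul_pow]; field_simp

lemma tsum_le_of_le_geometric {f : ℕ → ℝ} {C r : ℝ} (hf : ∀ n, 0 ≤ f n) (hr₀ : 0 ≤ r)
    (hr₁ : r < 1) (h : ∀ n, f n ≤ C * r ^ n) : ∑' n, f n ≤ C / (1 - r) := by
  have hgeom : HasSum (fun n ↦ C * r ^ n) (C / (1 - r)) := by
    simpa only [div_eq_mul_inv] using (hasSum_geometric_of_lt_one hr₀ hr₁).mul_left C
  exact hasSum_le h (Summable.of_nonneg_of_le hf h hgeom.summable).hasSum hgeom

/-- Exponential-form tail bound for the Jacobi–Anger truncation: if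
`|a m| ≤ (1/m!)·(t/2)^m` for all `m`, `q ≥ 2` and `q ≥ t - 1`, then
`2·∑_{l=0}^∞ |a (q+2l)| ≤ (4/(3·√π))·(e·t/(2q))^q`. -/
theorem stmt_18 (t : ℝ) (ht : 0 < t) (q : ℕ) (hq : 2 ≤ q) (hqt : (q : ℝ) ≥ t - 1)
    (a : ℕ → ℝ) (ha : ∀ m : ℕ, |a m| ≤ (1 / (m ! : ℝ)) * (t / 2) ^ m) :
    2 * ∑' l : ℕ, |a (q + 2 * l)|
      ≤ (4 / (3 * Real.sqrt Real.pi)) * (Real.exp 1 * t / (2 * q)) ^ q := by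
  have hx : 0 ≤ t / 2 := by positivity
  have hratio : (t / 2 / (q + 1)) ^ 2 ≤ 1 / 4 := by
    rw [div_pow, div_le_iff₀ (by positivity)]
    nlinarith
  have hterm : ∀ l, |a (q + 2 * l)| ≤ (t / 2) ^ q / q ! * (1 / 4) ^ l := fun l ↦ calc
    |a (q + 2 * l)| ≤ (t / 2) ^ (q + 2 * l) / (q + 2 * l)! := by
      simpa only [one_div_mul_eq_div] using ha (q + 2 * l)
    _ ≤ (t / 2) ^ q / q ! * ((t / 2 / (q + 1)) ^ 2) ^ l := by
      rw [← pow_mul]; exact pow_add_div_factorial_le hx q (2 * l)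
    _ ≤ (t / 2) ^ q / q ! * (1 / 4) ^ l := by gcongr
  have htail : ∑' l, |a (q + 2 * l)| ≤ (t / 2) ^ q / q ! * (4 / 3) :=
    (tsum_le_of_le_geometric (fun l ↦ abs_nonneg _) (by norm_num) (by norm_num) hterm).trans_eq
      (by ring)
  have hfirst := pow_div_factorial_le_of_two_le hx hq
  calc 2 * ∑' l, |a (q + 2 * l)| ≤ 8 / 3 * ((t / 2) ^ q / q !) := by linarith
    _ ≤ 8 / 3 * ((exp 1 * (t / 2) / q) ^ q / (2 * √π)) := by gcongr
    _ = 4 / (3 * √π) * (exp 1 * t / (2 * q)) ^ q := by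
      rw [show exp 1 * t / (2 * q) = exp 1 * (t / 2) / q by ring]; field_simp; ring
end
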